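/- Let f : [0,l] → ℝ be continuous with f(0)=0 and f''(t) + k·f(t) ≤ 0 in the support sense on (0,l), with l ≤ π/√k if k > 0. If f(t₁)/sn_k(t₁) = f(t₂)/sn_k(t₂) for some 0 < t₁ < t₂ < l, then f(t) = f'_+(0)·sn_k(t) for all t ∈ (0,t₂]. -/

import Mathlib

open Filter Set MeasureTheory intervalIntegral

/-- `sn_k`: the solution of `y'' + k y = 0` with `y 0 = 0`, `y' 0 = 1`. -/
noncomputable def snK (k t : ℝ) : ℝ :=
  if 0 < k then Real.sin (Real.sqrt k * t) / Real.sqrt k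
  else if k < 0 then Real.sinh (Real.sqrt (-k) * t) / Real.sqrt (-k)
  else t

/-- `sn_k'`: the derivative of `sn_k`. -/
noncomputable def snK' (k t : ℝ) : ℝ :=
  if 0 < k then Real.cos (Real.sqrt k * t)
  else if k < 0 then Real.cosh (Real.sqrt (-k) * t)
  else 1

/-- Upper right Dini derivative: `D⁺ f x = limsup_{h → 0⁺} (f (x+h) - f x) / h`. -/
noncomputable def upperDiniRight (f : ℝ → ℝ) (x : ℝ) : EReal :=
  Filter.limsup (fun h : ℝ => (((f (x + h) - f x) / h : ℝ) : EReal)) (nhdsWithin 0 (Set.Ioi 0))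
/-- `f'' t ≤ B` in the support sense: there is `A` such that
`f (t + τ) ≤ f t + A τ + (B/2) τ² + o(τ²)`. -/
def SuppSecondDerivLE (f : ℝ → ℝ) (t B : ℝ) : Prop :=
  ∃ A : ℝ, ∀ ε > 0, ∀ᶠ τ in nhds (0:ℝ),
    f (t + τ) ≤ f t + A * τ + B / 2 * τ ^ 2 + ε * τ ^ 2

lemma hasDerivAt_snK (k t : ℝ) : HasDerivAt (snK k) (snK' k t) t := by
  rcases lt_trichotomy 0 k with hk | hk | hk
  · have hs : Real.sqrt k ≠ 0 := (Real.sqrt_pos.mpr hk).ne'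
    have he : snK k = fun t => Real.sin (Real.sqrt k * t) / Real.sqrt k := by
      funext x; simp [snK, if_pos hk]
    have he' : snK' k t = Real.cos (Real.sqrt k * t) := by simp [snK', if_pos hk]
    rw [he, he']
    have h1 : HasDerivAt (fun t : ℝ => Real.sqrt k * t) (Real.sqrt k) t := by
      simpa using (hasDerivAt_id t).const_mul (Real.sqrt k)
    have h2 := ((Real.hasDerivAt_sin (Real.sqrt k * t)).comp t h1).div_const (Real.sqrt k)
    refine h2.congr_deriv (Eq.symm ?_)
    field_simp
  · have he : snK k = fun t => t := by
      funext x; simp [snK, ← hk]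
    have he' : snK' k t = 1 := by simp [snK', ← hk]
    rw [he, he']
    exact hasDerivAt_id t
  · have hnk : (0:ℝ) < -k := by linarith
    have hs : Real.sqrt (-k) ≠ 0 := (Real.sqrt_pos.mpr hnk).ne'
    have he : snK k = fun t => Real.sinh (Real.sqrt (-k) * t) / Real.sqrt (-k) := by
      funext x; simp [snK, if_neg (not_lt.mpr hk.le), if_pos hk]
    have he' : snK' k t = Real.cosh (Real.sqrt (-k) * t) := by
      simp [snK', if_neg (not_lt.mpr hk.le), if_pos hk]
    rw [he, he']
    have h1 : HasDerivAt (fun t : ℝ => Real.sqrt (-k) * t) (Real.sqrt (-k)) t := by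
      simpa using (hasDerivAt_id t).const_mul (Real.sqrt (-k))
    have h2 := ((Real.hasDerivAt_sinh (Real.sqrt (-k) * t)).comp t h1).div_const (Real.sqrt (-k))
    refine h2.congr_deriv (Eq.symm ?_)
    field_simp

lemma hasDerivAt_snK' (k t : ℝ) : HasDerivAt (snK' k) (-(k * snK k t)) t := by
  rcases lt_trichotomy 0 k with hk | hk | hk
  · have hs : Real.sqrt k ≠ 0 := (Real.sqrt_pos.mpr hk).ne'
    have hk2 : Real.sqrt k * Real.sqrt k = k := Real.mul_self_sqrt hk.le
    have he : snK' k = fun t => Real.cos (Real.sqrt k * t) := by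
      funext x; simp [snK', if_pos hk]
    have he' : snK k t = Real.sin (Real.sqrt k * t) / Real.sqrt k := by simp [snK, if_pos hk]
    rw [he, he']
    have h1 : HasDerivAt (fun t : ℝ => Real.sqrt k * t) (Real.sqrt k) t := by
      simpa using (hasDerivAt_id t).const_mul (Real.sqrt k)
    have h2 := (Real.hasDerivAt_cos (Real.sqrt k * t)).comp t h1
    refine h2.congr_deriv (Eq.symm ?_)
    field_simp
    linear_combination (Real.sin (Real.sqrt k * t)) * hk2
  · have he : snK' k = fun _ => (1:ℝ) := by
      funext x; simp [snK', ← hk]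
    have he' : -(k * snK k t) = 0 := by simp [← hk]
    rw [he, he']
    exact hasDerivAt_const t 1
  · have hnk : (0:ℝ) < -k := by linarith
    have hs : Real.sqrt (-k) ≠ 0 := (Real.sqrt_pos.mpr hnk).ne'
    have hk2 : Real.sqrt (-k) * Real.sqrt (-k) = -k := Real.mul_self_sqrt hnk.le
    have he : snK' k = fun t => Real.cosh (Real.sqrt (-k) * t) := by
      funext x; simp [snK', if_neg (not_lt.mpr hk.le), if_pos hk]
    have he' : snK k t = Real.sinh (Real.sqrt (-k) * t) / Real.sqrt (-k) := by
      simp [snK, if_neg (not_lt.mpr hk.le), if_pos hk]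
    rw [he, he']
    have h1 : HasDerivAt (fun t : ℝ => Real.sqrt (-k) * t) (Real.sqrt (-k)) t := by
      simpa using (hasDerivAt_id t).const_mul (Real.sqrt (-k))
    have h2 := (Real.hasDerivAt_cosh (Real.sqrt (-k) * t)).comp t h1
    refine h2.congr_deriv (Eq.symm ?_)
    field_simp
    linear_combination (-Real.sinh (Real.sqrt (-k) * t)) * hk2

lemma continuous_snK (k : ℝ) : Continuous (snK k) := by
  have h : Differentiable ℝ (snK k) := fun t => (hasDerivAt_snK k t).differentiableAt
  exact h.continuous

lemma snK_zero (k : ℝ) : snK k 0 = 0 := by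
  unfold snK; split_ifs <;> simp

lemma snK'_zero (k : ℝ) : snK' k 0 = 1 := by
  unfold snK'; split_ifs <;> simp

lemma snK_pos (k t : ℝ) (ht : 0 < t) (hkt : Real.sqrt k * t < Real.pi) : 0 < snK k t := by
  unfold snK
  split_ifs with h1 h2
  · exact div_pos (Real.sin_pos_of_pos_of_lt_pi (mul_pos (Real.sqrt_pos.mpr h1) ht) hkt)
      (Real.sqrt_pos.mpr h1)
  · exact div_pos (Real.sinh_pos_iff.mpr (mul_pos (Real.sqrt_pos.mpr (neg_pos.mpr h2)) ht))
      (Real.sqrt_pos.mpr (neg_pos.mpr h2))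
  · exact ht

lemma suppLE_mono {f : ℝ → ℝ} {t B B' : ℝ} (h : SuppSecondDerivLE f t B) (hBB : B ≤ B') :
    SuppSecondDerivLE f t B' := by
  obtain ⟨A, hA⟩ := h
  refine ⟨A, fun ε hε => ?_⟩
  filter_upwards [hA ε hε] with τ hτ
  nlinarith [sq_nonneg τ]

lemma suppLE_add {f g : ℝ → ℝ} {t B₁ B₂ : ℝ} (hf : SuppSecondDerivLE f t B₁)
    (hg : SuppSecondDerivLE g t B₂) :
    SuppSecondDerivLE (fun s => f s + g s) t (B₁ + B₂) := by
  obtain ⟨A₁, h₁⟩ := hf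
  obtain ⟨A₂, h₂⟩ := hg
  refine ⟨A₁ + A₂, fun ε hε => ?_⟩
  filter_upwards [h₁ (ε/2) (by linarith), h₂ (ε/2) (by linarith)] with τ ha hb
  show f (t + τ) + g (t + τ) ≤ f t + g t + (A₁ + A₂) * τ + (B₁ + B₂) / 2 * τ ^ 2 + ε * τ ^ 2
  linarith

lemma suppLE_of_C2 (g g' g'' : ℝ → ℝ)
    (h1 : ∀ s, HasDerivAt g (g' s) s) (h2 : ∀ s, HasDerivAt g' (g'' s) s)
    (h3 : Continuous g'') (t : ℝ) : SuppSecondDerivLE g t (g'' t) := by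
  refine ⟨g' t, fun ε hε => ?_⟩
  obtain ⟨r, hr, hball⟩ := Metric.continuousAt_iff.mp h3.continuousAt ε hε
  set q : ℝ → ℝ := fun s => g s - g' t * (s - t) - g'' t / 2 * (s - t) ^ 2 with hqdef
  set q' : ℝ → ℝ := fun s => g' s - g' t - g'' t * (s - t) with hq'def
  have hq : ∀ s, HasDerivAt q (q' s) s := by
    intro s
    have h := ((h1 s).sub (((hasDerivAt_id s).sub_const t).const_mul (g' t))).sub
      ((((hasDerivAt_id s).sub_const t).pow 2).const_mul (g'' t / 2))
    refine h.congr_deriv (Eq.symm ?_)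
    simp [hq'def]
    ring
  have hq' : ∀ s, HasDerivAt q' (g'' s - g'' t) s := by
    intro s
    have h := ((h2 s).sub_const (g' t)).sub (((hasDerivAt_id s).sub_const t).const_mul (g'' t))
    refine h.congr_deriv (Eq.symm ?_)
    ring
  have hq'bound : ∀ s ∈ Metric.ball t r, |q' s| ≤ ε * |s - t| := by
    intro s hs
    have h0 : q' t = 0 := by simp [hq'def]
    have hb := Convex.norm_image_sub_le_of_norm_hasDerivWithin_le
      (f := q') (f' := fun x => g'' x - g'' t) (C := ε) (s := Metric.ball t r)
      (fun x hx => (hq' x).hasDerivWithinAt)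
      (fun x hx => by
        have := hball (by simpa [Real.dist_eq] using hx)
        rw [Real.dist_eq] at this
        simpa [Real.norm_eq_abs] using this.le)
      (convex_ball t r) (Metric.mem_ball_self hr) hs
    simpa [h0, Real.norm_eq_abs, Real.dist_eq] using hb
  rw [Metric.eventually_nhds_iff]
  refine ⟨r, hr, fun τ hτ => ?_⟩
  have hτr : |τ| < r := by simpa [Real.dist_eq] using hτ
  have hmem : t + τ ∈ Metric.closedBall t |τ| := by
    simp [Metric.mem_closedBall, Real.dist_eq]
  have hsub : Metric.closedBall t |τ| ⊆ Metric.ball t r := Metric.closedBall_subset_ball hτr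
  have hb2 := Convex.norm_image_sub_le_of_norm_hasDerivWithin_le
      (f := q) (f' := q') (C := ε * |τ|) (s := Metric.closedBall t |τ|)
      (fun x hx => (hq x).hasDerivWithinAt)
      (fun x hx => by
        have h1' : |x - t| ≤ |τ| := by simpa [Real.dist_eq] using hx
        have h2' := hq'bound x (hsub hx)
        simp only [Real.norm_eq_abs]
        nlinarith)
      (convex_closedBall t |τ|) (Metric.mem_closedBall_self (abs_nonneg τ)) hmem
  have hqt : q t = g t := by simp [hqdef]
  have hkey : q (t + τ) - q t ≤ ε * τ ^ 2 := by
    have h := (abs_le.mp (by simpa [Real.norm_eq_abs] using hb2)).2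
    nlinarith [abs_nonneg τ, sq_abs τ, abs_mul_abs_self τ]
  have hexp : q (t + τ) = g (t + τ) - g' t * τ - g'' t / 2 * τ ^ 2 := by
    simp [hqdef]
  rw [hexp, hqt] at hkey
  linarith

lemma no_local_min_of_suppLE_neg {w : ℝ → ℝ} {t B : ℝ} (hB : B < 0)
    (hmin : ∀ᶠ τ in nhds (0:ℝ), w t ≤ w (t + τ))
    (hs : SuppSecondDerivLE w t B) : False := by
  obtain ⟨A, hA⟩ := hs
  have h := hmin.and (hA (-B/4) (by linarith))
  rw [Metric.eventually_nhds_iff] at h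
  obtain ⟨r, hr, hh⟩ := h
  have hd1 : dist (r/2) (0:ℝ) < r := by
    rw [Real.dist_eq, sub_zero, abs_of_pos (by linarith)]; linarith
  have hd2 : dist (-(r/2)) (0:ℝ) < r := by
    rw [Real.dist_eq, sub_zero, abs_of_neg (by linarith)]; linarith
  obtain ⟨ha1, hb1⟩ := hh hd1
  obtain ⟨ha2, hb2⟩ := hh hd2
  nlinarith [mul_pos hr hr]

lemma min_principle (k a b : ℝ) (hab : a < b) (u φ φ' φ'' : ℝ → ℝ)
    (hu : ContinuousOn u (Icc a b))
    (hsupp : ∀ t ∈ Ioo a b, SuppSecondDerivLE u t (-(k * u t)))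
    (hφ1 : ∀ s, HasDerivAt φ (φ' s) s) (hφ2 : ∀ s, HasDerivAt φ' (φ'' s) s)
    (hφc : Continuous φ'')
    (hφpos : ∀ t ∈ Icc a b, 0 < φ t)
    (hφsup : ∀ t ∈ Icc a b, φ'' t + k * φ t < 0)
    (hua : 0 ≤ u a) (hub : 0 ≤ u b) :
    ∀ t ∈ Icc a b, 0 ≤ u t := by
  by_contra hcon
  push_neg at hcon
  obtain ⟨t₀, ht₀, ht₀neg⟩ := hcon
  have hφcont : Continuous φ := by
    have h : Differentiable ℝ φ := fun s => (hφ1 s).differentiableAt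
    exact h.continuous
  have hrc : ContinuousOn (fun s => u s / φ s) (Icc a b) :=
    hu.div hφcont.continuousOn (fun t ht => (hφpos t ht).ne')
  obtain ⟨c, hc, hcmin⟩ := isCompact_Icc.exists_isMinOn (nonempty_Icc.mpr hab.le) hrc
  have hcmin' : ∀ s ∈ Icc a b, u c / φ c ≤ u s / φ s := fun s hs => hcmin hs
  set m := u c / φ c with hm
  have hmneg : m < 0 :=
    lt_of_le_of_lt (hcmin' t₀ ht₀) (div_neg_of_neg_of_pos ht₀neg (hφpos _ ht₀))
  have hwnonneg : ∀ s ∈ Icc a b, 0 ≤ u s + (-m) * φ s := by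
    intro s hs
    have h1 : m ≤ u s / φ s := hcmin' s hs
    have h2 : 0 < φ s := hφpos s hs
    rw [le_div_iff₀ h2] at h1
    linarith
  have hwc : u c + (-m) * φ c = 0 := by
    have h2 : φ c ≠ 0 := (hφpos c hc).ne'
    rw [hm, neg_mul, div_mul_cancel₀ _ h2]; ring
  have hca : c ≠ a := by
    intro h
    have : 0 ≤ m := by
      rw [hm, h]
      exact div_nonneg hua (hφpos a ⟨le_rfl, hab.le⟩).le
    linarith
  have hcb : c ≠ b := by
    intro h
    have : 0 ≤ m := by
      rw [hm, h]
      exact div_nonneg hub (hφpos b ⟨hab.le, le_rfl⟩).le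
    linarith
  have hcIoo : c ∈ Ioo a b := ⟨lt_of_le_of_ne hc.1 (Ne.symm hca), lt_of_le_of_ne hc.2 hcb⟩
  have hnb : Ioo a b ∈ nhds c := isOpen_Ioo.mem_nhds hcIoo
  have htend : Tendsto (fun τ : ℝ => c + τ) (nhds 0) (nhds c) := by
    have h := ((continuous_const.add continuous_id).tendsto (0:ℝ) : Tendsto (fun τ : ℝ => c + τ) (nhds 0) (nhds (c + 0)))
    simp only [Pi.add_apply, id_eq, add_zero] at h; exact h
  have hminloc : ∀ᶠ τ in nhds (0:ℝ),
      (fun s => u s + (-m) * φ s) c ≤ (fun s => u s + (-m) * φ s) (c + τ) := by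
    filter_upwards [htend.eventually_mem hnb] with τ hτ
    have h := hwnonneg _ (Ioo_subset_Icc_self hτ)
    show u c + (-m) * φ c ≤ u (c + τ) + (-m) * φ (c + τ)
    linarith
  have hsupp2 : SuppSecondDerivLE (fun s => u s + (-m) * φ s) c (-(k * u c) + (-m) * φ'' c) :=
    suppLE_add (hsupp c hcIoo) (suppLE_of_C2 (fun s => (-m) * φ s) (fun s => (-m) * φ' s)
      (fun s => (-m) * φ'' s) (fun s => (hφ1 s).const_mul _) (fun s => (hφ2 s).const_mul _)
      (continuous_const.mul hφc) c)
  have huc : u c = m * φ c := by linarith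
  have hBneg : -(k * u c) + (-m) * φ'' c < 0 := by
    have h := hφsup c hc
    have hmpos : 0 < -m := by linarith
    have heq2 : -(k * u c) + (-m) * φ'' c = (-m) * (φ'' c + k * φ c) := by
      rw [huc]; ring
    rw [heq2]
    exact mul_neg_of_pos_of_neg hmpos h
  exact no_local_min_of_suppLE_neg hBneg hminloc hsupp2

set_option maxHeartbeats 1000000

theorem quotient_rigidity_of_support (k l : ℝ) (f : ℝ → ℝ)
    (hk : 0 < k → l ≤ Real.pi / Real.sqrt k)
    (hcont : ContinuousOn f (Set.Icc 0 l))
    (hf0 : f 0 = 0)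
    (hsupp : ∀ t ∈ Set.Ioo 0 l, SuppSecondDerivLE f t (-(k * f t)))
    (t₁ t₂ : ℝ) (h0 : 0 < t₁) (h12 : t₁ < t₂) (h2l : t₂ < l)
    (heq : f t₁ / snK k t₁ = f t₂ / snK k t₂) :
    ∃ d : ℝ, HasDerivWithinAt f d (Set.Ici 0) 0 ∧
      ∀ t ∈ Set.Ioc 0 t₂, f t = d * snK k t := by
  have ht₂pos : 0 < t₂ := h0.trans h12
  have hπ : ∀ s : ℝ, s ≤ t₂ → Real.sqrt k * s < Real.pi := by
    intro s hs
    rcases le_or_gt k 0 with hk0 | hk0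
    · rw [Real.sqrt_eq_zero'.mpr hk0]
      simpa using Real.pi_pos
    · have h1 : 0 < Real.sqrt k := Real.sqrt_pos.mpr hk0
      have h2 : t₂ < Real.pi / Real.sqrt k := lt_of_lt_of_le h2l (hk hk0)
      rw [lt_div_iff₀ h1] at h2
      have h3 : Real.sqrt k * s ≤ Real.sqrt k * t₂ := by nlinarith
      linarith
  have snpos : ∀ s : ℝ, 0 < s → s ≤ t₂ → 0 < snK k s := fun s h1 h2 => snK_pos k s h1 (hπ s h2)
  set c := f t₁ / snK k t₁ with hc
  have hsn1 : snK k t₁ ≠ 0 := (snpos t₁ h0 h12.le).ne'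
  have hsn2 : snK k t₂ ≠ 0 := (snpos t₂ ht₂pos le_rfl).ne'
  have hft1 : f t₁ = c * snK k t₁ := by rw [hc]; field_simp
  have hft2 : f t₂ = c * snK k t₂ := by rw [heq]; field_simp
  set u : ℝ → ℝ := fun t => f t + -(c * snK k t) with hudef
  have hucont : ContinuousOn u (Icc 0 l) :=
    hcont.add ((continuous_const.mul (continuous_snK k)).neg.continuousOn)
  have husupp : ∀ t ∈ Ioo 0 l, SuppSecondDerivLE u t (-(k * u t)) := by
    intro t ht
    have h1 := hsupp t ht
    have h2 := suppLE_of_C2 (fun s => -(c * snK k s)) (fun s => -(c * snK' k s))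
      (fun s => -(c * -(k * snK k s)))
      (fun s => ((hasDerivAt_snK k s).const_mul c).neg)
      (fun s => ((hasDerivAt_snK' k s).const_mul c).neg)
      ((continuous_const.mul ((continuous_const.mul (continuous_snK k)).neg)).neg) t
    refine suppLE_mono (suppLE_add h1 h2) (le_of_eq ?_)
    show -(k * f t) + -(c * -(k * snK k t)) = -(k * (f t + -(c * snK k t)))
    ring
  have hu0 : u 0 = 0 := by
    show f 0 + -(c * snK k 0) = 0
    rw [hf0, snK_zero]; ring
  have hu1 : u t₁ = 0 := by
    show f t₁ + -(c * snK k t₁) = 0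
    rw [hft1]; ring
  have hu2 : u t₂ = 0 := by
    show f t₂ + -(c * snK k t₂) = 0
    rw [hft2]; ring
  -- the strict supersolution φ
  set ω := (Real.sqrt k + Real.pi / t₂) / 2 with hω
  have hsqrtlt : Real.sqrt k < Real.pi / t₂ := by
    have h := hπ t₂ le_rfl
    rw [lt_div_iff₀ ht₂pos]
    linarith
  have hω0 : 0 < ω := by
    have h1 := Real.sqrt_nonneg k
    have h2 : 0 < Real.pi / t₂ := div_pos Real.pi_pos ht₂pos
    rw [hω]; linarith
  have hωsq : k < ω ^ 2 := by
    rcases le_or_gt k 0 with hk0 | hk0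
    · nlinarith
    · have h1 : Real.sqrt k < ω := by rw [hω]; linarith
      nlinarith [Real.sq_sqrt hk0.le, Real.sqrt_nonneg k]
  have hωt₂ : ω * t₂ < Real.pi := by
    have : ω < Real.pi / t₂ := by rw [hω]; linarith
    rw [lt_div_iff₀ ht₂pos] at this
    linarith
  set φ : ℝ → ℝ := fun t => Real.cos (ω * (t - t₂/2)) with hφdef
  set φ' : ℝ → ℝ := fun t => -Real.sin (ω * (t - t₂/2)) * ω with hφ'def
  set φ'' : ℝ → ℝ := fun t => -(ω ^ 2) * Real.cos (ω * (t - t₂/2)) with hφ''def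
  have hinner : ∀ s : ℝ, HasDerivAt (fun t => ω * (t - t₂/2)) ω s := by
    intro s
    simpa using ((hasDerivAt_id s).sub_const (t₂/2)).const_mul ω
  have hφd : ∀ s, HasDerivAt φ (φ' s) s := by
    intro s
    exact (Real.hasDerivAt_cos (ω * (s - t₂/2))).comp s (hinner s)
  have hφd2 : ∀ s, HasDerivAt φ' (φ'' s) s := by
    intro s
    have h := (((Real.hasDerivAt_sin (ω * (s - t₂/2))).comp s (hinner s)).neg).mul_const ω
    refine h.congr_deriv (Eq.symm ?_)
    show -(ω ^ 2) * Real.cos (ω * (s - t₂/2)) = -(Real.cos (ω * (s - t₂/2)) * ω) * ω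
    ring
  have hφc : Continuous φ'' :=
    continuous_const.mul (Real.continuous_cos.comp
      (continuous_const.mul ((continuous_id.sub continuous_const))))
  have hφpos : ∀ s ∈ Icc 0 t₂, 0 < φ s := by
    intro s hs
    apply Real.cos_pos_of_mem_Ioo
    constructor
    · show -(Real.pi/2) < ω * (s - t₂/2)
      nlinarith [mul_nonneg hω0.le hs.1]
    · show ω * (s - t₂/2) < Real.pi/2
      nlinarith [mul_le_mul_of_nonneg_left hs.2 hω0.le]
  have hφsup : ∀ s ∈ Icc 0 t₂, φ'' s + k * φ s < 0 := by
    intro s hs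
    have h2 := hφpos s hs
    have h3 : φ'' s = -(ω ^ 2) * φ s := rfl
    rw [h3]
    nlinarith [mul_pos (sub_pos.mpr hωsq) h2]
  -- the comparison tool
  have key : ∀ a b : ℝ, 0 ≤ a → a < b → b ≤ t₂ →
      ∀ ψ ψ' : ℝ → ℝ, (∀ s, HasDerivAt ψ (ψ' s) s) →
      (∀ s, HasDerivAt ψ' (-(k * ψ s)) s) →
      ψ a ≤ u a → ψ b ≤ u b → ∀ t ∈ Icc a b, ψ t ≤ u t := by
    intro a b ha hab hbt₂ ψ ψ' hψ hψ' hψa hψb t ht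
    have hψcont : Continuous ψ := by
      have h : Differentiable ℝ ψ := fun s => (hψ s).differentiableAt
      exact h.continuous
    have hIccsub : Icc a b ⊆ Icc 0 l := Icc_subset_Icc ha (by linarith)
    have hIccsub2 : Icc a b ⊆ Icc 0 t₂ := Icc_subset_Icc ha hbt₂
    have hIoosub : Ioo a b ⊆ Ioo 0 l := Ioo_subset_Ioo ha (by linarith)
    have h := min_principle k a b hab (fun s => u s + -(ψ s)) φ φ' φ''
      ((hucont.mono hIccsub).add hψcont.neg.continuousOn)
      (fun s hs => by
        have h1 := husupp s (hIoosub hs)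
        have h2 := suppLE_of_C2 (fun x => -(ψ x)) (fun x => -(ψ' x)) (fun x => k * ψ x)
          (fun x => (hψ x).neg) (fun x => by have h := (hψ' x).neg; rw [neg_neg] at h; exact h)
          (continuous_const.mul hψcont) s
        refine suppLE_mono (suppLE_add h1 h2) (le_of_eq ?_)
        show -(k * u s) + k * ψ s = -(k * (u s + -(ψ s)))
        ring)
      hφd hφd2 hφc
      (fun s hs => hφpos s (hIccsub2 hs))
      (fun s hs => hφsup s (hIccsub2 hs))
      (by show 0 ≤ u a + -(ψ a); linarith)
      (by show 0 ≤ u b + -(ψ b); linarith)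
    have h2 := h t ht
    have h3 : 0 ≤ u t + -(ψ t) := h2
    linarith
  -- Step 1: u ≥ 0 on [0,t₁] and [t₁,t₂]
  have hA1 : ∀ s ∈ Icc 0 t₁, 0 ≤ u s := by
    have h := key 0 t₁ le_rfl h0 h12.le (fun _ => 0) (fun _ => 0)
      (fun s => hasDerivAt_const s 0) (fun s => by simpa using hasDerivAt_const s (0:ℝ))
      (by rw [hu0]) (by rw [hu1])
    intro s hs
    simpa using h s hs
  have hA2 : ∀ s ∈ Icc t₁ t₂, 0 ≤ u s := by
    have h := key t₁ t₂ h0.le h12 le_rfl (fun _ => 0) (fun _ => 0)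
      (fun s => hasDerivAt_const s 0) (fun s => by simpa using hasDerivAt_const s (0:ℝ))
      (by rw [hu1]) (by rw [hu2])
    intro s hs
    simpa using h s hs
  -- Step 2: u ≤ 0 strictly between via comparison with exact solutions
  have hA3 : ∀ s, t₁ < s → s < t₂ → u s ≤ 0 := by
    intro s hs1 hs2
    set a := t₁ / 2 with hadef
    have hapos : 0 < a := by rw [hadef]; linarith
    have hat1 : a < t₁ := by rw [hadef]; linarith
    have hsna : 0 < snK k (s - a) := snpos _ (by linarith) (by linarith)
    have hsnt1a : 0 < snK k (t₁ - a) := snpos _ (by linarith) (by linarith)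
    set coef := u s / snK k (s - a) with hcoef
    have hinn : ∀ x : ℝ, HasDerivAt (fun t : ℝ => t - a) 1 x := fun x => (hasDerivAt_id x).sub_const a
    have hψd : ∀ x, HasDerivAt (fun t => coef * snK k (t - a)) (coef * snK' k (x - a)) x := by
      intro x
      have h := ((hasDerivAt_snK k (x - a)).comp x (hinn x)).const_mul coef
      simpa using h
    have hψd2 : ∀ x, HasDerivAt (fun t => coef * snK' k (t - a))
        (-(k * (coef * snK k (x - a)))) x := by
      intro x
      have h := ((hasDerivAt_snK' k (x - a)).comp x (hinn x)).const_mul coef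
      refine h.congr_deriv (Eq.symm ?_)
      ring
    have hkey := key a s hapos.le (by linarith) (by linarith)
      (fun t => coef * snK k (t - a)) (fun t => coef * snK' k (t - a)) hψd hψd2
      (by
        show coef * snK k (a - a) ≤ u a
        rw [sub_self, snK_zero, mul_zero]
        exact hA1 a ⟨hapos.le, hat1.le⟩)
      (by
        show coef * snK k (s - a) ≤ u s
        rw [hcoef, div_mul_cancel₀ _ hsna.ne'])
    have h : coef * snK k (t₁ - a) ≤ 0 := by
      have h' := hkey t₁ ⟨hat1.le, hs1.le⟩
      rw [hu1] at h'
      exact h'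
    by_contra hpos
    push_neg at hpos
    have hcoefpos : 0 < coef := div_pos hpos hsna
    nlinarith [mul_pos hcoefpos hsnt1a]
  have hA4 : ∀ s, 0 < s → s < t₁ → u s ≤ 0 := by
    intro s hs1 hs2
    have hsna : 0 < snK k (t₂ - s) := snpos _ (by linarith) (by linarith)
    have hsnt1 : 0 < snK k (t₂ - t₁) := snpos _ (by linarith) (by linarith)
    set coef := u s / snK k (t₂ - s) with hcoef
    have hinn : ∀ x : ℝ, HasDerivAt (fun t : ℝ => t₂ - t) (-1) x := by
      intro x
      have h := (hasDerivAt_const x t₂).sub (hasDerivAt_id x); rw [zero_sub] at h; exact h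
    have hψd : ∀ x, HasDerivAt (fun t => coef * snK k (t₂ - t))
        (coef * (snK' k (t₂ - x) * (-1))) x := by
      intro x
      exact ((hasDerivAt_snK k (t₂ - x)).comp x (hinn x)).const_mul coef
    have hψd2 : ∀ x, HasDerivAt (fun t => coef * (snK' k (t₂ - t) * (-1)))
        (-(k * (coef * snK k (t₂ - x)))) x := by
      intro x
      have h := (((hasDerivAt_snK' k (t₂ - x)).comp x (hinn x)).mul_const (-1)).const_mul coef
      refine h.congr_deriv (Eq.symm ?_)
      ring
    have hkey := key s t₂ hs1.le (by linarith) le_rfl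
      (fun t => coef * snK k (t₂ - t)) (fun t => coef * (snK' k (t₂ - t) * (-1))) hψd hψd2
      (by
        show coef * snK k (t₂ - s) ≤ u s
        rw [hcoef, div_mul_cancel₀ _ hsna.ne'])
      (by
        show coef * snK k (t₂ - t₂) ≤ u t₂
        rw [sub_self, snK_zero, mul_zero, hu2])
    have h : coef * snK k (t₂ - t₁) ≤ 0 := by
      have h' := hkey t₁ ⟨hs2.le, h12.le⟩
      rw [hu1] at h'
      exact h'
    by_contra hpos
    push_neg at hpos
    have hcoefpos : 0 < coef := div_pos hpos hsna
    nlinarith [mul_pos hcoefpos hsnt1]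
  have hzero : ∀ t ∈ Ioc 0 t₂, u t = 0 := by
    rintro t ⟨ht1, ht2⟩
    rcases lt_trichotomy t t₁ with h | h | h
    · exact le_antisymm (hA4 t ht1 h) (hA1 t ⟨ht1.le, h.le⟩)
    · rw [h]; exact hu1
    · rcases eq_or_lt_of_le ht2 with h2 | h2
      · rw [h2]; exact hu2
      · exact le_antisymm (hA3 t h h2) (hA2 t ⟨h.le, ht2⟩)
  have hfeq : ∀ t ∈ Ioc 0 t₂, f t = c * snK k t := by
    intro t ht
    have h := hzero t ht
    have h2 : f t + -(c * snK k t) = 0 := h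
    linarith
  refine ⟨c, ?_, fun t ht => hfeq t ht⟩
  have hd : HasDerivAt (fun t => c * snK k t) c 0 := by
    have h := (hasDerivAt_snK k 0).const_mul c
    rw [snK'_zero, mul_one] at h
    exact h
  have heq' : f =ᶠ[nhdsWithin 0 (Ici 0)] fun t => c * snK k t := by
    have h1 : ∀ᶠ t in nhdsWithin (0:ℝ) (Ici 0), t ∈ Iio t₂ :=
      nhdsWithin_le_nhds (Iio_mem_nhds ht₂pos)
    have h2 : ∀ᶠ t in nhdsWithin (0:ℝ) (Ici 0), t ∈ Ici 0 := self_mem_nhdsWithin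
    filter_upwards [h1, h2] with t hti htic
    rcases eq_or_lt_of_le (Set.mem_Ici.mp htic) with h | h
    · rw [← h, hf0, snK_zero, mul_zero]
    · exact hfeq t ⟨h, le_of_lt hti⟩
  exact hd.hasDerivWithinAt.congr_of_eventuallyEq heq' (by rw [hf0, snK_zero, mul_zero])
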